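/- Let ℓ be a nonnegative integer. Define 𝔊(x,y,z) = Q_{4ℓ+3}(x,y)·sin z − Q_{4ℓ+3}(x,z)·sin y + Q_{4ℓ+3}(z,x)·cos y + Q_{4ℓ+3}(y,x)·cos z, and let V be the vector field on ℝ³ given by V(x,y,z) = (𝔊(x,y,z), 𝔊(y,z,x), 𝔊(z,x,y)). Then V has octahedral symmetry: for ε equal to any of the matrices α = [[1,0,0],[0,−1,0],[0,0,−1]], γ = [[0,1,0],[0,0,1],[1,0,0]], or δ = [[0,1,0],[1,0,0],[0,0,−1]], one has ε⁻¹ ∘ V ∘ ε = V (hence this holds for every ε in the octahedral group 𝕆 = ⟨α,γ,δ⟩ of order 24). -/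
import Mathlib


noncomputable section

open Real

/-- The standard harmonic polynomial `P_n(x,y) = Re((x+iy)^n)`. -/
def polyP (n : ℕ) (x y : ℝ) : ℝ := ((x + y * Complex.I) ^ n).re

/-- The standard harmonic polynomial `Q_n(x,y) = Im((x+iy)^n)`. -/
def polyQ (n : ℕ) (x y : ℝ) : ℝ := ((x + y * Complex.I) ^ n).im

/-- Partial derivative in the `i`-th coordinate direction. -/
def pd (i : Fin 3) (F : (Fin 3 → ℝ) → ℝ) : (Fin 3 → ℝ) → ℝ :=
  fun v => deriv (fun t => F (Function.update v i t)) (v i)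

/-- Divergence of a vector field on ℝ³. -/
def div3 (V : (Fin 3 → ℝ) → (Fin 3 → ℝ)) : (Fin 3 → ℝ) → ℝ :=
  fun v => pd 0 (fun w => V w 0) v + pd 1 (fun w => V w 1) v + pd 2 (fun w => V w 2) v

/-- Curl of a vector field on ℝ³. -/
def curl3 (V : (Fin 3 → ℝ) → (Fin 3 → ℝ)) : (Fin 3 → ℝ) → (Fin 3 → ℝ) :=
  fun v => ![pd 1 (fun w => V w 2) v - pd 2 (fun w => V w 1) v,
             pd 2 (fun w => V w 0) v - pd 0 (fun w => V w 2) v,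
             pd 0 (fun w => V w 1) v - pd 1 (fun w => V w 0) v]

/-- Laplacian of a scalar function on ℝ³. -/
def lap3 (F : (Fin 3 → ℝ) → ℝ) : (Fin 3 → ℝ) → ℝ :=
  fun v => pd 0 (pd 0 F) v + pd 1 (pd 1 F) v + pd 2 (pd 2 F) v

lemma Q_negr (n : ℕ) (a b : ℝ) : polyQ n a (-b) = - polyQ n a b := by
  unfold polyQ
  have h : ((a:ℂ) + ((-b:ℝ):ℂ) * Complex.I) = (starRingEnd ℂ) ((a:ℂ) + (b:ℝ)*Complex.I) := by
    simp [Complex.ext_iff]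
  rw [h, ← map_pow, Complex.conj_im]

lemma Q_negl (n : ℕ) (hn : Odd n) (a b : ℝ) : polyQ n (-a) b = polyQ n a b := by
  unfold polyQ
  have h : (((-a:ℝ):ℂ) + (b:ℝ) * Complex.I) = -((starRingEnd ℂ) ((a:ℂ) + (b:ℝ)*Complex.I)) := by
    simp [Complex.ext_iff]
  rw [h, hn.neg_pow, ← map_pow, Complex.neg_im, Complex.conj_im, neg_neg]

open Matrix in
/-- the octahedral field of order `4ℓ+3` is invariant under conjugation by
the generators `α`, `γ`, `δ` of the octahedral group `𝕆`. -/
theorem octahedral_symmetry_first (l : ℕ) :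
    let G : ℝ → ℝ → ℝ → ℝ := fun x y z =>
      polyQ (4 * l + 3) x y * Real.sin z - polyQ (4 * l + 3) x z * Real.sin y
        + polyQ (4 * l + 3) z x * Real.cos y + polyQ (4 * l + 3) y x * Real.cos z
    let V : (Fin 3 → ℝ) → (Fin 3 → ℝ) := fun v =>
      ![G (v 0) (v 1) (v 2), G (v 1) (v 2) (v 0), G (v 2) (v 0) (v 1)]
    let α : Matrix (Fin 3) (Fin 3) ℝ := !![1, 0, 0; 0, -1, 0; 0, 0, -1]
    let γ : Matrix (Fin 3) (Fin 3) ℝ := !![0, 1, 0; 0, 0, 1; 1, 0, 0]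
    let δ : Matrix (Fin 3) (Fin 3) ℝ := !![0, 1, 0; 1, 0, 0; 0, 0, -1]
    (∀ v, α⁻¹.mulVec (V (α.mulVec v)) = V v) ∧
    (∀ v, γ⁻¹.mulVec (V (γ.mulVec v)) = V v) ∧
    (∀ v, δ⁻¹.mulVec (V (δ.mulVec v)) = V v) := by
  have hodd : Odd (4 * l + 3) := ⟨2 * l + 1, by ring⟩
  dsimp only
  have hα : (!![1, 0, 0; 0, -1, 0; 0, 0, -1] : Matrix (Fin 3) (Fin 3) ℝ)⁻¹
      = !![1, 0, 0; 0, -1, 0; 0, 0, -1] := by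
    apply Matrix.inv_eq_left_inv
    rw [Matrix.mul_fin_three, Matrix.one_fin_three]
    norm_num
  have hγ : (!![0, 1, 0; 0, 0, 1; 1, 0, 0] : Matrix (Fin 3) (Fin 3) ℝ)⁻¹
      = !![0, 0, 1; 1, 0, 0; 0, 1, 0] := by
    apply Matrix.inv_eq_left_inv
    rw [Matrix.mul_fin_three, Matrix.one_fin_three]
    norm_num
  have hδ : (!![0, 1, 0; 1, 0, 0; 0, 0, -1] : Matrix (Fin 3) (Fin 3) ℝ)⁻¹
      = !![0, 1, 0; 1, 0, 0; 0, 0, -1] := by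
    apply Matrix.inv_eq_left_inv
    rw [Matrix.mul_fin_three, Matrix.one_fin_three]
    norm_num
  refine ⟨fun v => ?_, fun v => ?_, fun v => ?_⟩ <;>
    [rw [hα]; rw [hγ]; rw [hδ]] <;>
    funext i <;> fin_cases i <;>
    simp [Matrix.mulVec, dotProduct, Fin.sum_univ_three, Q_negr, Q_negl _ hodd] <;>
    ring
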